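/- arXiv:2211.02689 — 6 statements merged into one kernel-verified Lean document; each statement's English description precedes it below -/
import Mathlib

section
/- Let D ⊂ ℂⁿ be a bounded circular domain containing 0. Then the Friedrichs operator F of D, defined by F(g) = B(conj g) where B is the orthogonal projection of L²(D) onto the Bergman space A²(D), has rank one: its range is the one-dimensional space of constant functions. -/
/-!
For holomorphic `f` on `D`, the orbit average `z ↦ (2π)⁻¹ ∫ f (e^{iθ} z) dθ` is holomorphic on `D`
and equals `f 0` near `0` by the one-variable mean value property, hence on all of `D` by the
identity theorem. Rotations preserve `D` and Lebesgue measure, so Fubini gives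
`∫_D f = vol(D) f(0)` for every integrable holomorphic `f`. Testing the orthogonality of
`conj g - h` against `1` gives `h 0 = conj (g 0) =: c`; testing it against `h` and applying the mean
value property to `(g - g 0) h` and `h - c` gives `∫_D |h - c|² = 0`, so `h ≡ c` by continuity.
-/

open MeasureTheory Complex ComplexConjugate

noncomputable section

/-- `ℂⁿ` as functions `Fin n → ℂ`. -/
abbrev Cn (n : ℕ) := Fin n → ℂ

/-- A domain is circular if it is invariant under multiplication by unimodular scalars. -/
def IsCircular {n : ℕ} (D : Set (Cn n)) : Prop :=
  ∀ z ∈ D, ∀ θ : ℝ, Complex.exp (θ * Complex.I) • z ∈ D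

/-- A function `f` is `k`-homogeneous on `D` (for `k : ℤ`): `f (λ z) = λ ^ k * f z` for all
`z ∈ D` and all `λ ∈ ℂ` with `|λ|` in the connected component containing `1` of the set
`{r : ℝ | r ≠ 0, r z ∈ D}`. -/
def IsHomog {n : ℕ} (D : Set (Cn n)) (k : ℤ) (f : Cn n → ℂ) : Prop :=
  ∀ z ∈ D, ∀ c : ℂ, c ≠ 0 →
    ‖c‖ ∈ connectedComponentIn {r : ℝ | r ≠ 0 ∧ (r : ℂ) • z ∈ D} 1 →
    f (c • z) = c ^ k * f z


/-- Membership in the Bergman space `A²(D)`: holomorphic and square-integrable on `D`. -/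
def MemA2 {n : ℕ} (D : Set (Cn n)) (f : Cn n → ℂ) : Prop :=
  DifferentiableOn ℂ f D ∧ IntegrableOn (fun z => ‖f z‖ ^ 2) D volume

open Metric Set Filter Topology Real

section IdentityTheorem

variable {E F : Type*} [NormedAddCommGroup E] [NormedSpace ℂ E] [NormedAddCommGroup F]
  [NormedSpace ℂ F] [CompleteSpace F]

lemma eqOn_ball_of_eventually_eq_const {u : E → F} {y : E} {s : ℝ} {a : F}
    (hu : DifferentiableOn ℂ u (ball y s)) (hy : ∀ᶠ w in 𝓝 y, u w = a) :
    EqOn u (fun _ => a) (ball y s) := by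
  intro w hw
  rcases eq_or_ne w y with rfl | hne
  · exact hy.self_of_nhds
  have hwy : 0 < ‖w - y‖ := norm_pos_iff.2 (sub_ne_zero.2 hne)
  set ρ := s / ‖w - y‖
  have hρ : 1 < ρ := (one_lt_div hwy).2 (by rwa [mem_ball, dist_eq_norm] at hw)
  have hline : MapsTo (fun t : ℂ => y + t • (w - y)) (ball 0 ρ) (ball y s) := by
    intro t ht
    rw [mem_ball_zero_iff, lt_div_iff₀ hwy] at ht
    rwa [mem_ball, dist_eq_norm, add_sub_cancel_left, norm_smul]
  have hv : AnalyticOnNhd ℂ (fun t : ℂ => u (y + t • (w - y))) (ball 0 ρ) :=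
    (hu.comp (by fun_prop) hline).analyticOnNhd isOpen_ball
  have hℓ : Tendsto (fun t : ℂ => y + t • (w - y)) (𝓝 0) (𝓝 y) := by
    simpa using (show Continuous fun t : ℂ => y + t • (w - y) by fun_prop).tendsto 0
  simpa using hv.eqOn_of_preconnected_of_eventuallyEq analyticOnNhd_const
    (convex_ball 0 ρ).isPreconnected (mem_ball_self (by linarith)) (hℓ.eventually hy)
    (show (1 : ℂ) ∈ ball 0 ρ by simpa using hρ)

lemma eqOn_of_preconnected_of_eventually_eq_const {u : E → F} {D : Set E} {z₀ : E} {a : F}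
    (hD : IsOpen D) (hconn : IsPreconnected D) (hu : DifferentiableOn ℂ u D) (hz₀ : z₀ ∈ D)
    (hloc : ∀ᶠ z in 𝓝 z₀, u z = a) : EqOn u (fun _ => a) D := by
  suffices D ⊆ {z | ∀ᶠ w in 𝓝 z, u w = a} from fun z hz => (this hz).self_of_nhds
  refine hconn.subset_of_closure_inter_subset isOpen_setOfPred_eventually_nhds ⟨z₀, hz₀, hloc⟩ ?_
  rintro z ⟨hzA, hzD⟩
  obtain ⟨r, hr, hrD⟩ := Metric.isOpen_iff.1 hD z hzD
  obtain ⟨y, hyA, hzy⟩ := Metric.mem_closure_iff.1 hzA (r / 2) (half_pos hr)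
  have hyD : ball y (r / 2) ⊆ D :=
    (ball_subset_ball' (by rw [dist_comm]; linarith)).trans hrD
  exact mem_of_superset (isOpen_ball.mem_nhds hzy)
    (eqOn_ball_of_eventually_eq_const (hu.mono hyD) hyA)

end IdentityTheorem

lemma measurePreserving_smul_of_norm_eq_one {ι : Type*} [Fintype ι] {w : ℂ} (hw : ‖w‖ = 1) :
    MeasurePreserving (fun z : ι → ℂ => w • z) volume volume :=
  volume_preserving_pi fun _ =>
    (rotation ⟨w, by simpa [Submonoid.unitSphere] using hw⟩).measurePreserving

def orbitAverage {E F : Type*} [AddCommGroup E] [Module ℂ E] [NormedAddCommGroup F]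
    [NormedSpace ℝ F] (f : E → F) (z : E) : F :=
  circleAverage (fun w : ℂ => f (w • z)) 0 1

lemma orbitAverage_eventually_eq {E F : Type*} [NormedAddCommGroup E] [NormedSpace ℂ E]
    [NormedAddCommGroup F] [NormedSpace ℂ F] [CompleteSpace F] {D : Set E} {f : E → F}
    (hD : IsOpen D) (h0 : 0 ∈ D) (hf : DifferentiableOn ℂ f D) :
    ∀ᶠ z in 𝓝 0, orbitAverage f z = f 0 := by
  obtain ⟨r, hr, hrD⟩ := Metric.isOpen_iff.1 hD 0 h0
  filter_upwards [ball_mem_nhds 0 hr] with z hz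
  have hmaps : MapsTo (fun w : ℂ => w • z) (closedBall 0 1) D := by
    intro w hw
    apply hrD
    rw [mem_closedBall_zero_iff] at hw
    rw [mem_ball_zero_iff] at hz ⊢
    calc ‖w • z‖ = ‖w‖ * ‖z‖ := norm_smul w z
      _ ≤ ‖z‖ := mul_le_of_le_one_left (norm_nonneg z) hw
      _ < r := hz
  have hdisc : DiffContOnCl ℂ (fun w : ℂ => f (w • z)) (ball 0 |1|) := by
    rw [abs_one]
    exact DifferentiableOn.diffContOnCl (by
      rw [closure_ball 0 one_ne_zero]; exact hf.comp (by fun_prop) hmaps)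
  simpa [orbitAverage] using hdisc.circleAverage

namespace IsCircular

variable {n : ℕ} {D : Set (Cn n)} {f : Cn n → ℂ}

lemma smul_mem (hD : IsCircular D) {w : ℂ} (hw : ‖w‖ = 1) {z : Cn n} (hz : z ∈ D) :
    w • z ∈ D := by
  have hpolar := Complex.norm_mul_exp_arg_mul_I w
  rw [hw, ofReal_one, one_mul] at hpolar
  exact hpolar ▸ hD z hz w.arg

lemma preimage_smul (hD : IsCircular D) {w : ℂ} (hw : ‖w‖ = 1) :
    (fun z => w • z) ⁻¹' D = D := by
  have hw0 : w ≠ 0 := ne_zero_of_norm_ne_zero (hw ▸ one_ne_zero)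
  ext z
  refine ⟨fun hz => ?_, hD.smul_mem hw⟩
  simpa [inv_smul_smul₀ hw0] using hD.smul_mem (w := w⁻¹) (by simp [hw]) hz

lemma setIntegral_comp_smul {G : Type*} [NormedAddCommGroup G] [NormedSpace ℝ G]
    (hD : IsCircular D) {w : ℂ} (hw : ‖w‖ = 1) (f : Cn n → G) :
    ∫ z in D, f (w • z) = ∫ z in D, f z := by
  simpa [hD.preimage_smul hw] using
    (measurePreserving_smul_of_norm_eq_one hw).setIntegral_preimage_emb
      (measurableEmbedding_const_smul₀ (ne_zero_of_norm_ne_zero (hw ▸ one_ne_zero))) f D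

lemma integrableOn_comp_smul {G : Type*} [NormedAddCommGroup G] (hD : IsCircular D) {w : ℂ}
    (hw : ‖w‖ = 1) {f : Cn n → G} (hf : IntegrableOn f D) :
    IntegrableOn (fun z => f (w • z)) D := by
  simpa [hD.preimage_smul hw, Function.comp_def] using
    ((measurePreserving_smul_of_norm_eq_one hw).integrableOn_comp_preimage
      (measurableEmbedding_const_smul₀ (ne_zero_of_norm_ne_zero (hw ▸ one_ne_zero)))).2 hf

lemma exists_bound_norm_fderiv_smul (hcirc : IsCircular D) (hD : IsOpen D)
    (hf : DifferentiableOn ℂ f D) {z₀ : Cn n} (hz₀ : z₀ ∈ D) :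
    ∃ ε > 0, ∃ C, ∀ w : ℂ, ‖w‖ = 1 → ∀ x ∈ ball z₀ ε,
      w • x ∈ D ∧ ‖fderiv ℂ f (w • x)‖ ≤ C := by
  obtain ⟨δ, hδ, hδD⟩ := Metric.isOpen_iff.1 hD z₀ hz₀
  obtain ⟨ε, hε, hεδ⟩ : ∃ ε > 0, 2 * ε < δ := ⟨δ / 3, by positivity, by linarith⟩
  set K := (fun p : ℂ × Cn n => p.1 • p.2) '' (sphere 0 1 ×ˢ closedBall z₀ (2 * ε))
  have hKD : K ⊆ D := by
    rintro _ ⟨⟨w, x⟩, ⟨hw, hx⟩, rfl⟩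
    exact hcirc.smul_mem (mem_sphere_zero_iff_norm.1 hw)
      (hδD (closedBall_subset_ball hεδ hx))
  obtain ⟨M, hM⟩ := ((isCompact_sphere 0 1).prod (isCompact_closedBall z₀ (2 * ε))).image
    (by fun_prop) |>.exists_bound_of_continuousOn (hf.continuousOn.mono hKD)
  refine ⟨ε, hε, 2 * M / ε, fun w hw x hx => ?_⟩
  have hw0 : w ≠ 0 := ne_zero_of_norm_ne_zero (hw ▸ one_ne_zero)
  have hball : ball (w • x) ε ⊆ K := by
    rw [← one_mul ε, ← hw, ← _root_.smul_ball hw0]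
    rintro _ ⟨v, hv, rfl⟩
    refine ⟨(w, v), ⟨mem_sphere_zero_iff_norm.2 hw, ?_⟩, rfl⟩
    rw [mem_ball] at hx hv
    rw [mem_closedBall]
    linarith [dist_triangle v x z₀]
  have hwx : w • x ∈ K := hball (mem_ball_self hε)
  refine ⟨hKD hwx, Complex.norm_fderiv_le_div_of_mapsTo_ball
    (hf.mono (hball.trans hKD)) (fun v hv => ?_) hε⟩
  rw [mem_closedBall, dist_eq_norm]
  linarith [norm_sub_le (f v) (f (w • x)), hM v (hball hv), hM _ hwx]

lemma differentiableOn_orbitAverage (hcirc : IsCircular D) (hD : IsOpen D)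
    (hf : DifferentiableOn ℂ f D) : DifferentiableOn ℂ (orbitAverage f) D := by
  intro z₀ hz₀
  obtain ⟨ε, hε, C, hC⟩ := hcirc.exists_bound_norm_fderiv_smul hD hf hz₀
  have hunit (θ : ℝ) : ‖circleMap 0 1 θ‖ = 1 := by simp
  have hcont {x : Cn n} (hx : x ∈ ball z₀ ε) : Continuous fun θ => f (circleMap 0 1 θ • x) :=
    hf.continuousOn.comp_continuous (by fun_prop) fun θ => (hC _ (hunit θ) x hx).1
  have hderiv : HasFDerivAt (fun x => ∫ θ in 0..2 * π, f (circleMap 0 1 θ • x))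
      (∫ θ in 0..2 * π, circleMap 0 1 θ • fderiv ℂ f (circleMap 0 1 θ • z₀)) z₀ := by
    refine intervalIntegral.hasFDerivAt_integral_of_dominated_of_fderiv_le (bound := fun _ => C)
      (F := fun x θ => f (circleMap 0 1 θ • x))
      (F' := fun x θ => circleMap 0 1 θ • fderiv ℂ f (circleMap 0 1 θ • x))
      (ball_mem_nhds z₀ hε) ?_ ((hcont (mem_ball_self hε)).intervalIntegrable _ _) ?_ ?_
      intervalIntegrable_const ?_
    · filter_upwards [ball_mem_nhds z₀ hε] with x hx
      exact (hcont hx).aestronglyMeasurable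
    · exact ((continuous_circleMap 0 1).measurable.smul
        ((measurable_fderiv ℂ f).comp (by fun_prop))).aestronglyMeasurable
    · refine ae_of_all _ fun θ _ x hx => ?_
      rw [norm_smul, hunit, one_mul]
      exact (hC _ (hunit θ) x hx).2
    · refine ae_of_all _ fun θ _ x hx => ?_
      have hfx := (hf.differentiableAt (hD.mem_nhds (hC _ (hunit θ) x hx).1)).hasFDerivAt
      simpa [Function.comp_def, ContinuousLinearMap.comp_smul] using
        hfx.comp x ((hasFDerivAt_id x).const_smul (circleMap 0 1 θ))
  exact (hderiv.differentiableAt.const_smul (2 * π)⁻¹).differentiableWithinAt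

lemma setIntegral_orbitAverage (hcirc : IsCircular D) (hD : IsOpen D) (hf : ContinuousOn f D)
    (hfi : IntegrableOn f D) : ∫ z in D, orbitAverage f z = ∫ z in D, f z := by
  set μ := volume.restrict (Ioc 0 (2 * π))
  set G : ℝ × Cn n → ℂ := fun p => f (circleMap 0 1 p.1 • p.2)
  have hunit (θ : ℝ) : ‖circleMap 0 1 θ‖ = 1 := by simp
  have hG : Integrable G (μ.prod (volume.restrict D)) := by
    have hGm : AEStronglyMeasurable G (μ.prod (volume.restrict D)) := by
      rw [Measure.prod_restrict]
      exact (hf.comp (by fun_prop) fun p hp => hcirc.smul_mem (hunit p.1) hp.2).aestronglyMeasurable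
        (measurableSet_Ioc.prod hD.measurableSet)
    refine (integrable_prod_iff hGm).2 ⟨ae_of_all _ fun θ => ?_, ?_⟩
    · exact hcirc.integrableOn_comp_smul (hunit θ) hfi
    · simp only [G, hcirc.setIntegral_comp_smul (hunit _) fun z => ‖f z‖]
      exact integrable_const _
  have hswap := integral_integral_swap (f := fun θ z => G (θ, z)) hG
  have hμ : μ.real univ = 2 * π := by simp [μ, two_pi_pos.le]
  simp only [G, hcirc.setIntegral_comp_smul (hunit _), integral_const, hμ] at hswap
  calc ∫ z in D, orbitAverage f z = (2 * π)⁻¹ • ∫ z in D, ∫ θ, G (θ, z) ∂μ := by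
        simp only [orbitAverage, circleAverage_def, intervalIntegral.integral_of_le two_pi_pos.le,
          integral_smul]
        rfl
    _ = ∫ z in D, f z := by rw [← hswap, smul_smul, inv_mul_cancel₀ two_pi_pos.ne', one_smul]

theorem setIntegral_eq_smul_apply_zero (hcirc : IsCircular D) (hD : IsOpen D)
    (hconn : IsPreconnected D) (h0 : 0 ∈ D) (hf : DifferentiableOn ℂ f D)
    (hfi : IntegrableOn f D) : ∫ z in D, f z = volume.real D • f 0 := by
  have hconst : EqOn (orbitAverage f) (fun _ => f 0) D :=
    eqOn_of_preconnected_of_eventually_eq_const hD hconn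
      (hcirc.differentiableOn_orbitAverage hD hf) h0 (orbitAverage_eventually_eq hD h0 hf)
  rw [← hcirc.setIntegral_orbitAverage hD hf.continuousOn hfi,
    setIntegral_congr_fun hD.measurableSet hconst, setIntegral_const]

end IsCircular

lemma eqOn_of_integral_norm_sub_sq_eq_zero {X E : Type*} [TopologicalSpace X] [MeasurableSpace X]
    [NormedAddCommGroup E] {μ : Measure X} [μ.IsOpenPosMeasure] {U : Set X}
    [IsFiniteMeasure (μ.restrict U)] {f : X → E} {c : E} (hU : IsOpen U) (hf : ContinuousOn f U)
    (hf2 : MemLp f 2 (μ.restrict U)) (h : ∫ z in U, ‖f z - c‖ ^ 2 ∂μ = 0) :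
    EqOn f (fun _ => c) U := by
  have hint : Integrable (fun z => ‖f z - c‖ ^ 2) (μ.restrict U) :=
    (hf2.sub (memLp_const c)).integrable_norm_pow two_ne_zero
  have hae := (integral_eq_zero_iff_of_nonneg (fun _ => by positivity) hint).1 h
  refine Measure.eqOn_open_of_ae_eq (μ := μ) ?_ hU hf continuousOn_const
  filter_upwards [hae] with z hz
  simpa [sub_eq_zero] using hz

section Bergman

variable {n : ℕ} {D : Set (Cn n)} {g h : Cn n → ℂ}

lemma MemA2.memLp {f : Cn n → ℂ} (hD : IsOpen D) (hf : MemA2 D f) :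
    MemLp f 2 (volume.restrict D) :=
  (memLp_two_iff_integrable_sq_norm (hf.1.continuousOn.aestronglyMeasurable hD.measurableSet)).2
    hf.2

lemma memA2_const [IsFiniteMeasure (volume.restrict D)] (c : ℂ) : MemA2 D fun _ => c :=
  ⟨differentiableOn_const c, integrable_const _⟩

variable [IsFiniteMeasure (volume.restrict D)]

lemma apply_zero_eq_conj_of_integral_sub_eq_zero (hD : IsOpen D) (hV : volume.real D ≠ 0)
    (hmean : ∀ f : Cn n → ℂ, DifferentiableOn ℂ f D → IntegrableOn f D →
      ∫ z in D, f z = volume.real D • f 0)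
    (hg : MemA2 D g) (hh : MemA2 D h) (horth : ∫ z in D, (conj (g z) - h z) = 0) :
    h 0 = conj (g 0) := by
  have hgi := (hg.memLp hD).integrable one_le_two
  have hhi := (hh.memLp hD).integrable one_le_two
  have hgi' : Integrable (fun z => conj (g z)) (volume.restrict D) :=
    (hg.memLp hD).star.integrable one_le_two
  rw [integral_sub hgi' hhi, integral_conj,
    hmean g hg.1 hgi, hmean h hh.1 hhi] at horth
  have : (volume.real D : ℂ) * (conj (g 0) - h 0) = 0 := by
    simpa [Complex.real_smul, mul_sub] using horth
  exact (sub_eq_zero.1 ((mul_eq_zero.1 this).resolve_left (by exact_mod_cast hV))).symm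

lemma integral_norm_sub_sq_eq_zero_of_orthogonal (hD : IsOpen D) (hV : volume.real D ≠ 0)
    (hmean : ∀ f : Cn n → ℂ, DifferentiableOn ℂ f D → IntegrableOn f D →
      ∫ z in D, f z = volume.real D • f 0)
    (hg : MemA2 D g) (hh : MemA2 D h)
    (horth : ∀ φ : Cn n → ℂ, MemA2 D φ → ∫ z in D, (conj (g z) - h z) * conj (φ z) = 0) :
    ∫ z in D, ‖h z - conj (g 0)‖ ^ 2 = 0 := by
  set c := conj (g 0)
  have hh0 : h 0 = c := apply_zero_eq_conj_of_integral_sub_eq_zero hD hV hmean hg hh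
    (by simpa using horth _ (memA2_const 1))
  have hg2 := hg.memLp hD
  have hh2 := hh.memLp hD
  have hA : Integrable (fun z => (conj (g z) - h z) * conj (h z)) (volume.restrict D) :=
    (hg2.star.sub hh2).integrable_mul hh2.star
  have hB : Integrable (fun z => (g z - g 0) * h z) (volume.restrict D) :=
    (hg2.sub (memLp_const _)).integrable_mul hh2
  have hB' : Integrable (fun z => conj ((g z - g 0) * h z)) (volume.restrict D) :=
    Complex.conjCLE.toContinuousLinearMap.integrable_comp hB
  have hC : Integrable (fun z => h z - c) (volume.restrict D) :=
    (hh2.sub (memLp_const c)).integrable one_le_two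
  -- the first term integrates to zero by orthogonality, the other two by the mean value property
  have hsplit : ∀ z, ((‖h z - c‖ ^ 2 : ℝ) : ℂ) =
      -((conj (g z) - h z) * conj (h z)) + conj ((g z - g 0) * h z) - conj c * (h z - c) := by
    intro z
    push_cast
    rw [← Complex.mul_conj']
    simp only [c, map_sub, map_mul, Complex.conj_conj]
    ring
  have hsum : ((∫ z in D, ‖h z - c‖ ^ 2 : ℝ) : ℂ) = 0 := by
    have hmeanB : ∫ z in D, (g z - g 0) * h z = volume.real D • ((g 0 - g 0) * h 0) :=
      hmean _ ((hg.1.sub_const _).mul hh.1) hB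
    have hmeanC : ∫ z in D, (h z - c) = volume.real D • (h 0 - c) :=
      hmean _ (hh.1.sub_const c) hC
    rw [← integral_complex_ofReal, integral_congr_ae (ae_of_all _ hsplit), integral_sub,
      integral_add, integral_neg, integral_conj, integral_const_mul, horth h hh,
      hmeanB, hmeanC, hh0]
    · simp
    exacts [hA.neg, hB', hA.neg.add hB', hC.const_mul _]
  exact_mod_cast hsum

end Bergman

/-- The Friedrichs operator of a bounded circular domain containing `0` has rank one:
if `g ∈ A²(D)` and `h ∈ A²(D)` is the Bergman projection of `conj g`, i.e. `conj g - h` is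
orthogonal in `L²(D)` to every element of `A²(D)`, then `h` is constant on `D`. -/
theorem stmt2 {n : ℕ} (D : Set (Cn n)) (hD : IsOpen D) (hDconn : IsConnected D)
    (hbdd : Bornology.IsBounded D) (hcirc : IsCircular D) (h0 : 0 ∈ D)
    (g h : Cn n → ℂ) (hg : MemA2 D g) (hh : MemA2 D h)
    (hproj : ∀ φ : Cn n → ℂ, MemA2 D φ →
      ∫ z in D, (conj (g z) - h z) * conj (φ z) = 0) :
    ∃ c : ℂ, ∀ z ∈ D, h z = c := by
  have hfin : volume D ≠ ⊤ := hbdd.measure_lt_top.ne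
  have : IsFiniteMeasure (volume.restrict D) := isFiniteMeasure_restrict.2 hfin
  have hV : volume.real D ≠ 0 := (ENNReal.toReal_pos (hD.measure_pos volume ⟨0, h0⟩).ne' hfin).ne'
  have hL2 := integral_norm_sub_sq_eq_zero_of_orthogonal hD hV
    (fun f hf hfi => hcirc.setIntegral_eq_smul_apply_zero hD hDconn.isPreconnected h0 hf hfi)
    hg hh hproj
  exact ⟨conj (g 0), eqOn_of_integral_norm_sub_sq_eq_zero hD hh.1.continuousOn (hh.memLp hD) hL2⟩
end
end

section
/- Let φ : D₁ → D₂ be a proper holomorphic map of finite multiplicity m between bounded domains in ℂⁿ. Then for every f ∈ A²(D₂), the function f ∘ φ belongs to the weighted Bergman space A²(D₁, |Jφ|²), and m·∫_{D₂} |f|² dV = ∫_{D₁} |f ∘ φ|² |Jφ|² dV; hence the map Γ(f) = (1/√m)(f ∘ φ) is an isometric embedding of A²(D₂) into A²(D₁, |Jφ|²). -/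
open MeasureTheory Complex ComplexConjugate

noncomputable section

/-- Membership in the weighted Bergman space `A²(D, ν)`. -/
def MemA2w {n : ℕ} (D : Set (Cn n)) (ν : Cn n → ℝ) (f : Cn n → ℂ) : Prop :=
  DifferentiableOn ℂ f D ∧ IntegrableOn (fun z => ‖f z‖ ^ 2 * ν z) D volume

/-- The complex Jacobian determinant of a map `ℂⁿ → ℂⁿ`. -/
def Jac {n : ℕ} (φ : Cn n → Cn n) (z : Cn n) : ℂ := (fderiv ℂ φ z).det

/-- `φ : D₁ → D₂` is a proper holomorphic map of (finite) multiplicity `m`: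
holomorphic, surjective onto `D₂`, proper (preimages of compacts are compact), and there is a
set `Z` of measure zero off which every fiber has exactly `m` points. -/
structure ProperHoloMult {n : ℕ} (D₁ D₂ : Set (Cn n)) (φ : Cn n → Cn n) (m : ℕ) : Prop where
  holo : DifferentiableOn ℂ φ D₁
  surj : φ '' D₁ = D₂
  proper : ∀ K ⊆ D₂, IsCompact K → IsCompact (D₁ ∩ φ ⁻¹' K)
  mult : ∃ Z : Set (Cn n), Z ⊆ D₂ ∧ volume Z = 0 ∧
    ∀ w ∈ D₂ \ Z, (D₁ ∩ φ ⁻¹' {w}).ncard = m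

/-!
Off its critical set `{Jφ = 0}`, `φ` is a local diffeomorphism, so the change of variables formula
applied on countably many pieces on which `φ` is injective gives the area formula
`∫_{D₁} g(φ z) |det_ℝ Dφ(z)| dz = ∫ #(D₁ ∩ φ⁻¹{w}) g(w) dw`; the critical values are negligible by
Sard's lemma in equal dimensions. For holomorphic `φ` the real Jacobian is `|Jφ|²`, and the fibres
have `m` points off a null set, so with `g = |f|²` both sides are `m ∫_{D₂} |f|²`.
-/

open Set Function
open scoped NNReal ENNReal

theorem encard_inter_preimage_eq_tsum_indicator {α β ι : Type*} {f : α → β} {s : Set α}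
    {t : ι → Set α} (ht : Pairwise (Disjoint on t)) (hst : s ⊆ ⋃ i, t i)
    (hinj : ∀ i, InjOn f (s ∩ t i)) (y : β) :
    ((s ∩ f ⁻¹' {y}).encard : ℝ≥0∞) = ∑' i, (f '' (s ∩ t i)).indicator 1 y := by
  cases isEmpty_or_nonempty ι
  · simp [subset_empty_iff.mp (iUnion_of_empty t ▸ hst)]
  have hpiece : ∀ x ∈ s, ∃ i, x ∈ t i := fun x hx => mem_iUnion.mp (hst hx)
  choose! piece hpiece using hpiece
  have hK : piece '' (s ∩ f ⁻¹' {y}) = {i | y ∈ f '' (s ∩ t i)} := by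
    ext i
    constructor
    · rintro ⟨x, ⟨hxs, hxy⟩, rfl⟩
      exact ⟨x, ⟨hxs, hpiece x hxs⟩, hxy⟩
    · rintro ⟨x, ⟨hxs, hxi⟩, hxy⟩
      refine ⟨x, ⟨hxs, hxy⟩, ?_⟩
      by_contra hne
      exact disjoint_left.mp (ht hne) (hpiece x hxs) hxi
  have hpiece_inj : InjOn piece (s ∩ f ⁻¹' {y}) := by
    rintro x ⟨hxs, hxy⟩ x' ⟨hx's, hx'y⟩ hxx'
    refine hinj (piece x) ⟨hxs, hpiece x hxs⟩ ⟨hx's, hxx' ▸ hpiece x' hx's⟩ ?_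
    rw [mem_preimage, mem_singleton_iff] at hxy hx'y
    rw [hxy, hx'y]
  rw [← hpiece_inj.encard_image, hK, ← ENNReal.tsum_set_one,
    tsum_subtype {i | y ∈ f '' (s ∩ t i)} (fun _ => (1 : ℝ≥0∞))]
  rfl

section AreaFormula

variable {E : Type*} [NormedAddCommGroup E] [NormedSpace ℝ E] [FiniteDimensional ℝ E]
  {f : E → E} {s : Set E}

theorem ApproximatesLinearOn.injOn_of_det_ne_zero {A : E →L[ℝ] E} (hA : A.det ≠ 0)
    (hf : ApproximatesLinearOn f A s (‖A.inverse‖₊ + 1)⁻¹) : InjOn f s := by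
  set e := A.toContinuousLinearEquivOfDetNeZero hA
  have he : (e : E →L[ℝ] E) = A := A.coe_toContinuousLinearEquivOfDetNeZero hA
  rw [← he, ContinuousLinearMap.inverse_equiv] at hf
  refine hf.injOn ?_
  rcases subsingleton_or_nontrivial E with hE | hE
  · exact Or.inl hE
  · exact Or.inr (NNReal.inv_lt_inv (e.nnnorm_symm_pos).ne' (lt_add_one _))

theorem exists_partition_injOn_of_hasFDerivWithinAt [MeasurableSpace E] [BorelSpace E]
    (f' : E → E →L[ℝ] E)
    (hf' : ∀ x ∈ s, HasFDerivWithinAt f (f' x) s x) (hdet : ∀ x ∈ s, (f' x).det ≠ 0) :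
    ∃ t : ℕ → Set E, Pairwise (Disjoint on t) ∧ (∀ n, MeasurableSet (t n)) ∧
      s ⊆ ⋃ n, t n ∧ ∀ n, InjOn f (s ∩ t n) := by
  -- `(‖A⁻¹‖₊ + 1)⁻¹` is positive for every `A`, and below `‖A⁻¹‖₊⁻¹` when `A` is invertible.
  obtain ⟨t, A, t_disj, t_meas, t_cover, t_approx, hA⟩ :=
    exists_partition_approximatesLinearOn_of_hasFDerivWithinAt f s f' hf'
      (fun A => (‖A.inverse‖₊ + 1)⁻¹) (fun _ => by positivity)
  refine ⟨t, t_disj, t_meas, t_cover, fun n => ?_⟩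
  rcases s.eq_empty_or_nonempty with rfl | hs
  · simp
  obtain ⟨y, hy, hAy⟩ := hA hs n
  exact (t_approx n).injOn_of_det_ne_zero (hAy ▸ hdet y hy)

variable [MeasurableSpace E] [BorelSpace E] (μ : Measure E) [μ.IsAddHaarMeasure]

theorem lintegral_abs_det_fderiv_mul_comp_eq_encard_of_det_ne_zero {f' : E → E →L[ℝ] E}
    (hs : MeasurableSet s) (hf' : ∀ x ∈ s, HasFDerivWithinAt f (f' x) s x)
    (hdet : ∀ x ∈ s, (f' x).det ≠ 0) {g : E → ℝ≥0∞} (hg : AEMeasurable g μ) :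
    ∫⁻ x in s, ENNReal.ofReal |(f' x).det| * g (f x) ∂μ
      = ∫⁻ y, (s ∩ f ⁻¹' {y}).encard * g y ∂μ := by
  obtain ⟨t, t_disj, t_meas, t_cover, t_inj⟩ :=
    exists_partition_injOn_of_hasFDerivWithinAt f' hf' hdet
  have hpiece_meas : ∀ n, MeasurableSet (s ∩ t n) := fun n => hs.inter (t_meas n)
  have hpiece_deriv : ∀ n, ∀ x ∈ s ∩ t n, HasFDerivWithinAt f (f' x) (s ∩ t n) x :=
    fun n x hx => (hf' x hx.1).mono inter_subset_left
  have himage_meas : ∀ n, MeasurableSet (f '' (s ∩ t n)) := fun n =>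
    measurable_image_of_fderivWithin (hpiece_meas n) (hpiece_deriv n) (t_inj n)
  calc ∫⁻ x in s, ENNReal.ofReal |(f' x).det| * g (f x) ∂μ
      = ∑' n, ∫⁻ x in s ∩ t n, ENNReal.ofReal |(f' x).det| * g (f x) ∂μ := by
        rw [← lintegral_iUnion hpiece_meas
          (fun i j hij => (t_disj hij).mono inter_subset_right inter_subset_right),
          ← inter_iUnion, inter_eq_left.mpr t_cover]
    _ = ∑' n, ∫⁻ y, (f '' (s ∩ t n)).indicator 1 y * g y ∂μ := by
        refine tsum_congr fun n => ?_
        rw [← lintegral_image_eq_lintegral_abs_det_fderiv_mul μ (hpiece_meas n)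
          (hpiece_deriv n) (t_inj n), ← lintegral_indicator (himage_meas n)]
        congr 1
        ext y
        by_cases hy : y ∈ f '' (s ∩ t n) <;> simp [hy]
    _ = ∫⁻ y, (s ∩ f ⁻¹' {y}).encard * g y ∂μ := by
        rw [← lintegral_tsum (f := fun n y => (f '' (s ∩ t n)).indicator 1 y * g y)
          fun n => (aemeasurable_one.indicator (himage_meas n)).mul hg]
        simp_rw [ENNReal.tsum_mul_right,
          ← encard_inter_preimage_eq_tsum_indicator t_disj t_cover t_inj]

theorem lintegral_abs_det_fderiv_mul_comp_eq_encard {f' : E → E →L[ℝ] E} (hs : MeasurableSet s)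
    (hf' : ∀ x ∈ s, HasFDerivWithinAt f (f' x) s x) (hf'_meas : Measurable f')
    {g : E → ℝ≥0∞} (hg : AEMeasurable g μ) :
    ∫⁻ x in s, ENNReal.ofReal |(f' x).det| * g (f x) ∂μ
      = ∫⁻ y, (s ∩ f ⁻¹' {y}).encard * g y ∂μ := by
  set R := {x | (f' x).det ≠ 0}
  have hR : MeasurableSet R :=
    (ContinuousLinearMap.continuous_det.measurable.comp hf'_meas) (measurableSet_singleton 0).compl
  have hcrit : μ (f '' (s \ R)) = 0 :=
    addHaar_image_eq_zero_of_det_fderivWithin_eq_zero μ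
      (fun x hx => (hf' x hx.1).mono sdiff_subset) fun x hx => not_not.mp hx.2
  have hcrit_integral : ∫⁻ x in s \ R, ENNReal.ofReal |(f' x).det| * g (f x) ∂μ = 0 := by
    refine (setLIntegral_congr_fun (hs.diff hR) fun x hx => ?_).trans lintegral_zero
    simp [not_not.mp hx.2]
  calc ∫⁻ x in s, ENNReal.ofReal |(f' x).det| * g (f x) ∂μ
      = ∫⁻ x in s ∩ R, ENNReal.ofReal |(f' x).det| * g (f x) ∂μ := by
        rw [← lintegral_inter_add_sdiff _ s hR, hcrit_integral, add_zero]
    _ = ∫⁻ y, (s ∩ R ∩ f ⁻¹' {y}).encard * g y ∂μ :=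
        lintegral_abs_det_fderiv_mul_comp_eq_encard_of_det_ne_zero μ (hs.inter hR)
          (fun x hx => (hf' x hx.1).mono inter_subset_left) (fun x hx => hx.2) hg
    _ = ∫⁻ y, (s ∩ f ⁻¹' {y}).encard * g y ∂μ := by
        refine lintegral_congr_ae ?_
        filter_upwards [measure_eq_zero_iff_ae_notMem.mp hcrit] with y hy
        congr 3
        ext x
        refine ⟨fun hx => ⟨hx.1.1, hx.2⟩, fun hx => ⟨⟨hx.1, fun hxR => hy ?_⟩, hx.2⟩⟩
        exact ⟨x, ⟨hx.1, not_not.mpr hxR⟩, hx.2⟩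

end AreaFormula

theorem ContinuousLinearMap.det_restrictScalars_complex {E : Type*} [NormedAddCommGroup E]
    [NormedSpace ℂ E] [FiniteDimensional ℂ E] (L : E →L[ℂ] E) :
    (L.restrictScalars ℝ).det = Complex.normSq L.det := by
  rw [← Algebra.norm_complex_apply, ← LinearMap.det_restrictScalars]
  rfl

theorem lintegral_norm_jac_sq_mul_comp_eq_encard {n : ℕ} {D : Set (Cn n)} {φ : Cn n → Cn n}
    (hD : IsOpen D) (hφ : DifferentiableOn ℂ φ D) {g : Cn n → ℝ≥0∞} (hg : AEMeasurable g) :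
    ∫⁻ z in D, ENNReal.ofReal (‖Jac φ z‖ ^ 2) * g (φ z)
      = ∫⁻ w, (D ∩ φ ⁻¹' {w}).encard * g w := by
  have hdet : ∀ z, ENNReal.ofReal |((fderiv ℂ φ z).restrictScalars ℝ).det|
      = ENNReal.ofReal (‖Jac φ z‖ ^ 2) := fun z => by
    rw [ContinuousLinearMap.det_restrictScalars_complex, abs_of_nonneg (Complex.normSq_nonneg _),
      Complex.normSq_eq_norm_sq, Jac]
  simp_rw [← hdet]
  refine lintegral_abs_det_fderiv_mul_comp_eq_encard volume hD.measurableSet (fun z hz => ?_) ?_ hg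
  · exact ((hφ.differentiableAt (hD.mem_nhds hz)).hasFDerivAt.restrictScalars ℝ).hasFDerivWithinAt
  · exact (ContinuousLinearMap.restrictScalarsL ℂ (Cn n) (Cn n) ℝ ℂ).continuous.measurable.comp
      (measurable_fderiv ℂ φ)

theorem ProperHoloMult.lintegral_comp_mul_norm_jac_sq {n m : ℕ} {D₁ D₂ : Set (Cn n)}
    {φ : Cn n → Cn n} (hφ : ProperHoloMult D₁ D₂ φ m) (hD₁ : IsOpen D₁)
    (hD₂ : MeasurableSet D₂) (hm : 0 < m) {g : Cn n → ℝ≥0∞}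
    (hg : AEMeasurable g (volume.restrict D₂)) :
    ∫⁻ z in D₁, g (φ z) * ENNReal.ofReal (‖Jac φ z‖ ^ 2) = m * ∫⁻ w in D₂, g w := by
  obtain ⟨Z, -, hZ, hfiber⟩ := hφ.mult
  have hmaps : MapsTo φ D₁ D₂ := fun z hz => hφ.surj ▸ mem_image_of_mem φ hz
  have hfiber_ae : ∀ᵐ w ∂volume.restrict D₂, ((D₁ ∩ φ ⁻¹' {w}).encard : ℝ≥0∞) = m := by
    filter_upwards [ae_restrict_mem hD₂, ae_restrict_of_ae (measure_eq_zero_iff_ae_notMem.mp hZ)]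
      with w hwD hwZ
    have hcard := hfiber w ⟨hwD, hwZ⟩
    have hfin : (D₁ ∩ φ ⁻¹' {w}).Finite := finite_of_ncard_ne_zero (hcard ▸ hm.ne')
    rw [← hfin.cast_ncard_eq, hcard]
    rfl
  calc ∫⁻ z in D₁, g (φ z) * ENNReal.ofReal (‖Jac φ z‖ ^ 2)
      = ∫⁻ z in D₁, ENNReal.ofReal (‖Jac φ z‖ ^ 2) * D₂.indicator g (φ z) :=
        setLIntegral_congr_fun hD₁.measurableSet fun z hz => by
          rw [indicator_of_mem (hmaps hz), mul_comm]
    _ = ∫⁻ w, (D₁ ∩ φ ⁻¹' {w}).encard * D₂.indicator g w :=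
        lintegral_norm_jac_sq_mul_comp_eq_encard hD₁ hφ.holo
          ((aemeasurable_indicator_iff hD₂).mpr hg)
    _ = ∫⁻ w in D₂, (D₁ ∩ φ ⁻¹' {w}).encard * g w := by
        rw [← lintegral_indicator hD₂]
        simp only [indicator_mul_right]
    _ = ∫⁻ w in D₂, m * g w :=
        lintegral_congr_ae (hfiber_ae.mono fun w hw => congrArg (· * g w) hw)
    _ = m * ∫⁻ w in D₂, g w := lintegral_const_mul' _ _ (ENNReal.natCast_ne_top m)

theorem stmt3_general {n m : ℕ} (D₁ D₂ : Set (Cn n)) (hD₁ : IsOpen D₁) (hD₂ : IsOpen D₂)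
    (hm : 0 < m) (φ : Cn n → Cn n) (hφ : ProperHoloMult D₁ D₂ φ m)
    (f : Cn n → ℂ) (hf : MemA2 D₂ f) :
    MemA2w D₁ (fun z => ‖Jac φ z‖ ^ 2) (f ∘ φ) ∧
    (m : ℝ) * ∫ w in D₂, ‖f w‖ ^ 2 = ∫ z in D₁, ‖f (φ z)‖ ^ 2 * ‖Jac φ z‖ ^ 2 := by
  have hmaps : MapsTo φ D₁ D₂ := fun z hz => hφ.surj ▸ mem_image_of_mem φ hz
  have hholo : DifferentiableOn ℂ (f ∘ φ) D₁ := hf.1.comp hφ.holo hmaps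
  have key : ∫⁻ z in D₁, ENNReal.ofReal (‖f (φ z)‖ ^ 2 * ‖Jac φ z‖ ^ 2)
      = m * ∫⁻ w in D₂, ENNReal.ofReal (‖f w‖ ^ 2) := by
    simp_rw [ENNReal.ofReal_mul (sq_nonneg _)]
    exact hφ.lintegral_comp_mul_norm_jac_sq hD₁ hD₂.measurableSet hm
      hf.2.aemeasurable.ennreal_ofReal
  have hmeas : AEStronglyMeasurable (fun z => ‖f (φ z)‖ ^ 2 * ‖Jac φ z‖ ^ 2)
      (volume.restrict D₁) :=
    ((hholo.continuousOn.aemeasurable hD₁.measurableSet).norm.pow_const 2).mul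
      ((ContinuousLinearMap.continuous_det.measurable.comp
        (measurable_fderiv ℂ φ)).norm.pow_const 2).aemeasurable |>.aestronglyMeasurable
  have hint : IntegrableOn (fun z => ‖f (φ z)‖ ^ 2 * ‖Jac φ z‖ ^ 2) D₁ := by
    refine ⟨hmeas, (hasFiniteIntegral_iff_ofReal (ae_of_all _ fun z => by positivity)).mpr ?_⟩
    rw [key]
    exact ENNReal.mul_lt_top (ENNReal.natCast_lt_top m)
      ((hasFiniteIntegral_iff_ofReal (ae_of_all _ fun w => by positivity)).mp hf.2.2)
  refine ⟨⟨hholo, hint⟩, ?_⟩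
  rw [integral_eq_lintegral_of_nonneg_ae (ae_of_all _ fun w => by positivity) hf.2.1,
    integral_eq_lintegral_of_nonneg_ae (ae_of_all _ fun z => by positivity) hmeas, key,
    ENNReal.toReal_mul, ENNReal.toReal_natCast]

theorem stmt3 {n m : ℕ} (D₁ D₂ : Set (Cn n)) (hD₁ : IsOpen D₁) (hD₂ : IsOpen D₂)
    (hc₁ : IsConnected D₁) (hc₂ : IsConnected D₂)
    (hb₁ : Bornology.IsBounded D₁) (hb₂ : Bornology.IsBounded D₂)
    (hm : 0 < m) (φ : Cn n → Cn n) (hφ : ProperHoloMult D₁ D₂ φ m)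
    (f : Cn n → ℂ) (hf : MemA2 D₂ f) :
    MemA2w D₁ (fun z => ‖Jac φ z‖ ^ 2) (f ∘ φ) ∧
    (m : ℝ) * ∫ w in D₂, ‖f w‖ ^ 2 = ∫ z in D₁, ‖f (φ z)‖ ^ 2 * ‖Jac φ z‖ ^ 2 :=
  stmt3_general D₁ D₂ hD₁ hD₂ hm φ hφ f hf
end
end

section
/- For x = (x₁,x₂,x₃) ∈ ℂ³, the inequality |x₁ − conj(x₂)x₃| + |x₁x₂ − x₃| < 1 − |x₂|² holds if and only if |x₂ − conj(x₁)x₃| + |x₁x₂ − x₃| < 1 − |x₁|². -/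
open Complex ComplexConjugate

/-! Write `p, q, r` for `‖x₁‖, ‖x₂‖, ‖x₃‖` and `c` for `‖x₁ x₂ - x₃‖`. Expanding norms gives
`‖x₁ - x̄₂ x₃‖² = c² + (p² - r²)(1 - q²)`, so the first inequality is equivalent to
`c < 1 - q²` together with the condition `2c < 1 - p² - q² + r²`, which is symmetric in `p, q`.
Two triangle inequalities show that the first inequality also forces `c < 1 - p²`; hence both
inequalities are equivalent to the same symmetric system. -/

lemma add_lt_iff_of_sq_eq {a c s t : ℝ} (ha : 0 ≤ a) (hc : 0 ≤ c)
    (h : a ^ 2 = c ^ 2 + t * s) (hcs : c < s) : a + c < s ↔ t < s - 2 * c := by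
  have hs : 0 < s := hc.trans_lt hcs
  calc a + c < s ↔ a ^ 2 < (s - c) ^ 2 := by
        rw [pow_lt_pow_iff_left₀ ha (by linarith) two_ne_zero]; constructor <;> intro <;> linarith
    _ ↔ t * s < (s - 2 * c) * s := by rw [h]; constructor <;> intro <;> nlinarith
    _ ↔ t < s - 2 * c := mul_lt_mul_iff_of_pos_right hs

lemma norm_sub_conj_mul_sq (x y z : ℂ) :
    ‖x - conj y * z‖ ^ 2 = ‖x * y - z‖ ^ 2 + (‖x‖ ^ 2 - ‖z‖ ^ 2) * (1 - ‖y‖ ^ 2) := by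
  simp only [Complex.sq_norm, Complex.normSq_apply, Complex.sub_re, Complex.sub_im,
    Complex.mul_re, Complex.mul_im, Complex.conj_re, Complex.conj_im]
  ring

lemma norm_mul_sub_lt_one_sub_sq_of_add_lt {x y z : ℂ}
    (h : ‖x - conj y * z‖ + ‖x * y - z‖ < 1 - ‖y‖ ^ 2) : ‖x * y - z‖ < 1 - ‖x‖ ^ 2 := by
  set p := ‖x‖
  set q := ‖y‖
  set r := ‖z‖
  set a := ‖x - conj y * z‖
  set c := ‖x * y - z‖
  have hp : p ≤ a + q * r := by
    simpa [a, norm_mul] using norm_le_norm_sub_add x (conj y * z)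
  have hr : r ≤ p * q + c := by
    simpa [norm_mul] using norm_le_norm_add_norm_sub (x * y) z
  have hp0 : 0 ≤ p := norm_nonneg _
  have ha : 0 ≤ a := norm_nonneg _
  have hc : 0 ≤ c := norm_nonneg _
  have hq : 0 ≤ q := norm_nonneg _
  have hq1 : q < 1 := by nlinarith
  -- `p (1 - q²) ≤ a + q c` by chaining the triangle inequalities; now divide by `1 - q`
  have hcpq : c < (1 + q) * (1 - p) := by nlinarith [mul_le_mul_of_nonneg_left hr hq]
  -- `c < min (1 - q²) ((1 + q)(1 - p)) ≤ 1 - p²`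
  rcases le_or_gt p q with hpq | hqp
  · nlinarith
  · nlinarith

lemma norm_sub_conj_mul_add_norm_mul_sub_lt_iff (x₁ x₂ x₃ : ℂ) :
    ‖x₁ - conj x₂ * x₃‖ + ‖x₁ * x₂ - x₃‖ < 1 - ‖x₂‖ ^ 2 ↔
      ‖x₁ * x₂ - x₃‖ < 1 - ‖x₁‖ ^ 2 ∧ ‖x₁ * x₂ - x₃‖ < 1 - ‖x₂‖ ^ 2 ∧
        2 * ‖x₁ * x₂ - x₃‖ < 1 - ‖x₁‖ ^ 2 - ‖x₂‖ ^ 2 + ‖x₃‖ ^ 2 := by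
  have key := add_lt_iff_of_sq_eq (norm_nonneg _) (norm_nonneg _)
    (norm_sub_conj_mul_sq x₁ x₂ x₃)
  constructor
  · intro h
    have hc : ‖x₁ * x₂ - x₃‖ < 1 - ‖x₂‖ ^ 2 := by linarith [norm_nonneg (x₁ - conj x₂ * x₃)]
    have hK := (key hc).1 h
    exact ⟨norm_mul_sub_lt_one_sub_sq_of_add_lt h, hc, by linarith⟩
  · rintro ⟨-, hc, hK⟩
    exact (key hc).2 (by linarith)

/-- Equivalence of two of the defining inequalities of the tetrablock. -/
theorem stmt11 (x₁ x₂ x₃ : ℂ) :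
    ‖x₁ - conj x₂ * x₃‖ + ‖x₁ * x₂ - x₃‖ < 1 - ‖x₂‖ ^ 2 ↔
    ‖x₂ - conj x₁ * x₃‖ + ‖x₁ * x₂ - x₃‖ < 1 - ‖x₁‖ ^ 2 := by
  rw [norm_sub_conj_mul_add_norm_mul_sub_lt_iff, mul_comm x₁ x₂,
    norm_sub_conj_mul_add_norm_mul_sub_lt_iff]
  constructor <;> rintro ⟨h₁, h₂, hK⟩ <;> exact ⟨h₂, h₁, by linarith⟩
end

section
/- For (x₁,x₂,x₃) ∈ ℂ³: there exists a symmetric 2×2 complex matrix A with operator norm ‖A‖ < 1 and (x₁,x₂,x₃) = (a₁₁, a₂₂, det A) if and only if |x₃| < 1 and there exist β₁, β₂ ∈ ℂ with |β₁| + |β₂| < 1, x₁ = β₁ + conj(β₂)x₃, and x₂ = β₂ + conj(β₁)x₃. -/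
open Complex ComplexConjugate

noncomputable section

/-!
`‖A‖ < 1` means that `1 - A* A` is positive definite. Writing `A* A = [[p, r], [r̄, q]]`, this is
`p < 1` and `|r|² < (1 - p)(1 - q)` (a uniform constant `< 1` comes from the larger eigenvalue of
`A* A`); since `p + q = ‖A‖_F²` and `pq - |r|² = |det A|²` (Lagrange's identity), it amounts to
`|det A| < 1` and `‖A‖_F² < 1 + |det A|²`.

For symmetric `A = [[a, b], [b, d]]` with `Δ = det A`, put `u = a - d̄ Δ`, `v = d - ā Δ`,
`w = b + b̄ Δ` and `t = 1 + |Δ|² - ‖A‖_F²`. Then `u v = t Δ + w²` and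
`|u|² + |v|² = (1 - |Δ|²)² - t (1 + |Δ|²) - 2 |w|²`, so
`(|u| + |v|)² = (1 - |Δ|²)² - t (1 - |Δ|)² + 2 (|u v| - t |Δ| - |w|²)`, and the triangle inequality
for `u v = t Δ + w²` shows that `|u| + |v| < 1 - |Δ|²` exactly when `t > 0`.
Finally, for `|Δ| < 1` the map `(β₁, β₂) ↦ (β₁ + β̄₂ Δ, β₂ + β̄₁ Δ)` is inverted by
`x ↦ (x₁ - x̄₂ Δ, x₂ - x̄₁ Δ) / (1 - |Δ|²)`, and conversely `b` is a square root of `x₁ x₂ - x₃`.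
-/

theorem ContinuousLinearMap.opNorm_lt_one_iff_exists_sq_le {𝕜 E F : Type*}
    [NontriviallyNormedField 𝕜] [SeminormedAddCommGroup E] [SeminormedAddCommGroup F]
    [NormedSpace 𝕜 E] [NormedSpace 𝕜 F] (T : E →L[𝕜] F) :
    ‖T‖ < 1 ↔ ∃ k < 1, ∀ x, ‖T x‖ ^ 2 ≤ k * ‖x‖ ^ 2 := by
  constructor
  · intro h
    refine ⟨‖T‖ ^ 2, by nlinarith [norm_nonneg T], fun x => ?_⟩
    rw [← mul_pow]
    exact pow_le_pow_left₀ (norm_nonneg _) (T.le_opNorm x) 2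
  · rintro ⟨k, hk, hT⟩
    have hbound : ∀ x, ‖T x‖ ≤ √(max k 0) * ‖x‖ := fun x => by
      rw [← Real.sqrt_sq (norm_nonneg (T x)), ← Real.sqrt_sq (norm_nonneg x),
        ← Real.sqrt_mul (le_max_right _ _)]
      exact Real.sqrt_le_sqrt ((hT x).trans (by gcongr; exact le_max_left _ _))
    calc ‖T‖ ≤ √(max k 0) := T.opNorm_le_bound (Real.sqrt_nonneg _) hbound
      _ < 1 := by rw [Real.sqrt_lt' one_pos]; simpa using hk

theorem two_mul_mul_le_of_sq_le {a b c : ℝ} (ha : 0 ≤ a) (hb : 0 ≤ b) (hc : 0 ≤ c)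
    (habc : c ^ 2 ≤ a * b) (s t : ℝ) : 2 * c * (s * t) ≤ a * s ^ 2 + b * t ^ 2 := by
  rcases ha.eq_or_lt with rfl | ha
  · obtain rfl : c = 0 := by nlinarith
    nlinarith [mul_nonneg hb (sq_nonneg t)]
  · refine le_of_mul_le_mul_left ?_ ha
    nlinarith [sq_nonneg (a * s - c * t), mul_nonneg (sub_nonneg.2 habc) (sq_nonneg t)]

theorem hermitianForm_le_of_sq_norm_le {p q l : ℝ} {r : ℂ} (hp : p ≤ l) (hq : q ≤ l)
    (hr : ‖r‖ ^ 2 ≤ (l - p) * (l - q)) (y z : ℂ) :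
    p * ‖y‖ ^ 2 + q * ‖z‖ ^ 2 + 2 * (conj y * r * z).re ≤ l * (‖y‖ ^ 2 + ‖z‖ ^ 2) := by
  have hre : (conj y * r * z).re ≤ ‖r‖ * (‖y‖ * ‖z‖) :=
    (re_le_norm _).trans_eq (by simp only [norm_mul, norm_conj]; ring)
  nlinarith [two_mul_mul_le_of_sq_le (sub_nonneg.2 hp) (sub_nonneg.2 hq) (norm_nonneg r) hr ‖y‖ ‖z‖]

theorem exists_lt_one_forall_hermitianForm_le_iff (p q : ℝ) (r : ℂ) :
    (∃ k < 1, ∀ y z : ℂ,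
      p * ‖y‖ ^ 2 + q * ‖z‖ ^ 2 + 2 * (conj y * r * z).re ≤ k * (‖y‖ ^ 2 + ‖z‖ ^ 2)) ↔
      p < 1 ∧ ‖r‖ ^ 2 < (1 - p) * (1 - q) := by
  constructor
  · rintro ⟨k, hk, hQ⟩
    have hp : p < 1 := lt_of_le_of_lt (by simpa using hQ 1 0) hk
    refine ⟨hp, ?_⟩
    have hQr := hQ r (1 - p : ℝ)
    rw [conj_mul', ← ofReal_pow, ← ofReal_mul, ofReal_re, norm_real, Real.norm_eq_abs, sq_abs]
      at hQr
    have h1p : 0 < 1 - p := sub_pos.2 hp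
    have hlt : k * (‖r‖ ^ 2 + (1 - p) ^ 2) < ‖r‖ ^ 2 + (1 - p) ^ 2 :=
      mul_lt_of_lt_one_left (by positivity) hk
    refine lt_of_mul_lt_mul_left ?_ h1p.le
    nlinarith
  · rintro ⟨hp, hr⟩
    -- the largest eigenvalue of `!![p, r; conj r, q]`
    set s := √((p - q) ^ 2 + 4 * ‖r‖ ^ 2)
    have hs : s ^ 2 = (p - q) ^ 2 + 4 * ‖r‖ ^ 2 := Real.sq_sqrt (by positivity)
    have hpq := abs_le.1 (Real.abs_le_sqrt (by nlinarith [norm_nonneg r]) : |p - q| ≤ s)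
    refine ⟨(p + q + s) / 2, ?_, hermitianForm_le_of_sq_norm_le ?_ ?_ ?_⟩
    · have hq : q < 1 :=
        sub_pos.1 <| pos_of_mul_pos_right ((sq_nonneg _).trans_lt hr) (sub_pos.2 hp).le
      have : s < 2 - p - q := (Real.sqrt_lt' (by linarith)).2 (by nlinarith)
      linarith
    · linarith
    · linarith
    · nlinarith

theorem Complex.sq_norm_mul_sub_mul (a b c d : ℂ) :
    ‖a * d - b * c‖ ^ 2 =
      (‖a‖ ^ 2 + ‖c‖ ^ 2) * (‖b‖ ^ 2 + ‖d‖ ^ 2) - ‖conj a * b + conj c * d‖ ^ 2 := by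
  simp only [Complex.sq_norm, normSq_apply]
  simp only [mul_re, mul_im, sub_re, sub_im, add_re, add_im, conj_re, conj_im]
  ring

theorem Matrix.sq_norm_toEuclideanCLM_fin_two (A : Matrix (Fin 2) (Fin 2) ℂ)
    (x : EuclideanSpace ℂ (Fin 2)) :
    ‖Matrix.toEuclideanCLM (𝕜 := ℂ) A x‖ ^ 2 =
      (‖A 0 0‖ ^ 2 + ‖A 1 0‖ ^ 2) * ‖x 0‖ ^ 2 + (‖A 0 1‖ ^ 2 + ‖A 1 1‖ ^ 2) * ‖x 1‖ ^ 2
        + 2 * (conj (x 0) * (conj (A 0 0) * A 0 1 + conj (A 1 0) * A 1 1) * x 1).re := by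
  rw [EuclideanSpace.norm_sq_eq]
  simp only [Fin.sum_univ_two, Complex.sq_norm, normSq_apply]
  simp only [ofLp_toEuclideanCLM, mulVec, dotProduct, Fin.sum_univ_two, add_re, mul_re, add_im,
    mul_im, conj_re, conj_im]
  ring

theorem EuclideanSpace.forall_fin_two {𝕜 : Type*} [RCLike 𝕜]
    {P : EuclideanSpace 𝕜 (Fin 2) → Prop} : (∀ x, P x) ↔ ∀ y z : 𝕜, P !₂[y, z] := by
  refine ⟨fun h y z => h _, fun h x => ?_⟩
  have hx : x = !₂[x 0, x 1] := by ext i; fin_cases i <;> rfl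
  exact hx ▸ h _ _

theorem Matrix.norm_toEuclideanCLM_lt_one_iff_fin_two (A : Matrix (Fin 2) (Fin 2) ℂ) :
    ‖toEuclideanCLM (𝕜 := ℂ) A‖ < 1 ↔
      ‖A.det‖ < 1 ∧ ‖A 0 0‖ ^ 2 + ‖A 0 1‖ ^ 2 + ‖A 1 0‖ ^ 2 + ‖A 1 1‖ ^ 2 < 1 + ‖A.det‖ ^ 2 := by
  simp only [ContinuousLinearMap.opNorm_lt_one_iff_exists_sq_le, sq_norm_toEuclideanCLM_fin_two]
  rw [exists_congr fun k => and_congr_right fun _ => EuclideanSpace.forall_fin_two]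
  simp only [EuclideanSpace.norm_sq_eq, Fin.sum_univ_two, Matrix.cons_val_zero, Matrix.cons_val_one]
  rw [exists_lt_one_forall_hermitianForm_le_iff, ← sq_lt_one_iff₀ (norm_nonneg _),
    Matrix.det_fin_two, Complex.sq_norm_mul_sub_mul]
  have hp : 0 ≤ ‖A 0 0‖ ^ 2 + ‖A 1 0‖ ^ 2 := by positivity
  have hq : 0 ≤ ‖A 0 1‖ ^ 2 + ‖A 1 1‖ ^ 2 := by positivity
  have hr := sq_nonneg ‖conj (A 0 0) * A 0 1 + conj (A 1 0) * A 1 1‖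
  constructor
  · rintro ⟨h1, h2⟩
    have hq1 : ‖A 0 1‖ ^ 2 + ‖A 1 1‖ ^ 2 < 1 :=
      sub_pos.1 <| pos_of_mul_pos_right (hr.trans_lt h2) (sub_pos.2 h1).le
    constructor
    · nlinarith [mul_le_mul h1.le hq1.le hq zero_le_one]
    · linarith
  · rintro ⟨h1, h2⟩
    have h1p : ‖A 0 0‖ ^ 2 + ‖A 1 0‖ ^ 2 < 1 := by nlinarith
    exact ⟨h1p, by linarith⟩

theorem norm_add_norm_lt_one_sub_sq_iff {u v w Δ : ℂ} {t : ℝ} (hΔ : ‖Δ‖ < 1)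
    (hmul : u * v = t * Δ + w ^ 2)
    (hsq : ‖u‖ ^ 2 + ‖v‖ ^ 2 = (1 - ‖Δ‖ ^ 2) ^ 2 - t * (1 + ‖Δ‖ ^ 2) - 2 * ‖w‖ ^ 2) :
    ‖u‖ + ‖v‖ < 1 - ‖Δ‖ ^ 2 ↔ 0 < t := by
  have hD : 0 < 1 - ‖Δ‖ ^ 2 := by nlinarith [norm_nonneg Δ]
  have key : (‖u‖ + ‖v‖) ^ 2 = (1 - ‖Δ‖ ^ 2) ^ 2 - t * (1 - ‖Δ‖) ^ 2
      + 2 * (‖u * v‖ - (t * ‖Δ‖ + ‖w‖ ^ 2)) := by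
    rw [norm_mul]; linear_combination hsq
  have htΔ : ‖(t : ℂ) * Δ‖ = |t| * ‖Δ‖ := by rw [norm_mul, norm_real, Real.norm_eq_abs]
  constructor
  · intro h
    by_contra! ht
    have hw : ‖w‖ ^ 2 + t * ‖Δ‖ ≤ ‖u * v‖ := by
      have := norm_sub_le (u * v) ((t : ℂ) * Δ)
      rw [hmul, add_sub_cancel_left, norm_pow, htΔ, abs_of_nonpos ht, ← hmul] at this
      linarith
    nlinarith [mul_nonneg (neg_nonneg.2 ht) (sq_nonneg (1 - ‖Δ‖)), norm_nonneg u, norm_nonneg v]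
  · intro ht
    have hw : ‖u * v‖ ≤ t * ‖Δ‖ + ‖w‖ ^ 2 := by
      have := norm_add_le ((t : ℂ) * Δ) (w ^ 2)
      rwa [← hmul, norm_pow, htΔ, abs_of_pos ht] at this
    have : (‖u‖ + ‖v‖) ^ 2 < (1 - ‖Δ‖ ^ 2) ^ 2 := by
      nlinarith [mul_pos ht (pow_pos (sub_pos.2 hΔ) 2)]
    exact (pow_lt_pow_iff_left₀ (by positivity) hD.le two_ne_zero).1 this

theorem sub_conj_mul_mul_sub_conj_mul (a b d : ℂ) :
    (a - conj d * (a * d - b ^ 2)) * (d - conj a * (a * d - b ^ 2)) =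
      ((1 + ‖a * d - b ^ 2‖ ^ 2 - (‖a‖ ^ 2 + ‖b‖ ^ 2 + ‖b‖ ^ 2 + ‖d‖ ^ 2) : ℝ) : ℂ)
          * (a * d - b ^ 2) + (b + conj b * (a * d - b ^ 2)) ^ 2 := by
  simp only [Complex.sq_norm, normSq_apply]
  simp only [Complex.ext_iff, mul_re, mul_im, sub_re, sub_im, add_re, add_im, conj_re, conj_im,
    ofReal_re, ofReal_im, pow_two]
  constructor <;> ring

theorem sq_norm_sub_conj_mul_add_sq_norm_sub_conj_mul (a b d : ℂ) :
    ‖a - conj d * (a * d - b ^ 2)‖ ^ 2 + ‖d - conj a * (a * d - b ^ 2)‖ ^ 2 =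
      (1 - ‖a * d - b ^ 2‖ ^ 2) ^ 2
        - (1 + ‖a * d - b ^ 2‖ ^ 2 - (‖a‖ ^ 2 + ‖b‖ ^ 2 + ‖b‖ ^ 2 + ‖d‖ ^ 2))
          * (1 + ‖a * d - b ^ 2‖ ^ 2)
        - 2 * ‖b + conj b * (a * d - b ^ 2)‖ ^ 2 := by
  simp only [Complex.sq_norm, normSq_apply]
  simp only [mul_re, mul_im, sub_re, sub_im, add_re, add_im, conj_re, conj_im, pow_two]
  ring

theorem sq_norm_add_lt_one_add_iff {a b d : ℂ} (hΔ : ‖a * d - b ^ 2‖ < 1) :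
    ‖a‖ ^ 2 + ‖b‖ ^ 2 + ‖b‖ ^ 2 + ‖d‖ ^ 2 < 1 + ‖a * d - b ^ 2‖ ^ 2 ↔
      ‖a - conj d * (a * d - b ^ 2)‖ + ‖d - conj a * (a * d - b ^ 2)‖
        < 1 - ‖a * d - b ^ 2‖ ^ 2 := by
  rw [norm_add_norm_lt_one_sub_sq_iff hΔ (sub_conj_mul_mul_sub_conj_mul a b d)
    (sq_norm_sub_conj_mul_add_sq_norm_sub_conj_mul a b d), sub_pos]

theorem conj_add_sub_conj_mul (β₁ β₂ Δ : ℂ) :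
    (β₁ + conj β₂ * Δ) - conj (β₂ + conj β₁ * Δ) * Δ = ((1 - ‖Δ‖ ^ 2 : ℝ) : ℂ) * β₁ := by
  simp only [map_add, map_mul, conj_conj]
  push_cast
  linear_combination -β₁ * conj_mul' Δ

theorem sub_conj_add_conj_mul (x₁ x₂ Δ : ℂ) :
    (x₁ - conj x₂ * Δ) + conj (x₂ - conj x₁ * Δ) * Δ = ((1 - ‖Δ‖ ^ 2 : ℝ) : ℂ) * x₁ := by
  simp only [map_sub, map_mul, conj_conj]
  push_cast
  linear_combination -x₁ * conj_mul' Δ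

theorem exists_norm_add_norm_lt_one_iff {x₁ x₂ Δ : ℂ} (hΔ : ‖Δ‖ < 1) :
    (∃ β₁ β₂ : ℂ, ‖β₁‖ + ‖β₂‖ < 1 ∧ x₁ = β₁ + conj β₂ * Δ ∧ x₂ = β₂ + conj β₁ * Δ) ↔
      ‖x₁ - conj x₂ * Δ‖ + ‖x₂ - conj x₁ * Δ‖ < 1 - ‖Δ‖ ^ 2 := by
  have hc : 0 < 1 - ‖Δ‖ ^ 2 := by nlinarith [norm_nonneg Δ]
  have hnorm : ‖((1 - ‖Δ‖ ^ 2 : ℝ) : ℂ)‖ = 1 - ‖Δ‖ ^ 2 := by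
    rw [norm_real, Real.norm_of_nonneg hc.le]
  constructor
  · rintro ⟨β₁, β₂, hβ, rfl, rfl⟩
    rw [conj_add_sub_conj_mul, conj_add_sub_conj_mul, norm_mul, norm_mul, hnorm, ← mul_add]
    exact mul_lt_of_lt_one_right hc hβ
  · intro h
    have hc₀ : ((1 - ‖Δ‖ ^ 2 : ℝ) : ℂ) ≠ 0 := ofReal_ne_zero.2 hc.ne'
    refine ⟨(x₁ - conj x₂ * Δ) / ((1 - ‖Δ‖ ^ 2 : ℝ) : ℂ), (x₂ - conj x₁ * Δ) / ((1 - ‖Δ‖ ^ 2 : ℝ) : ℂ),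
      ?_, ?_, ?_⟩
    · rwa [norm_div, norm_div, hnorm, ← add_div, div_lt_one hc]
    · rw [map_div₀, conj_ofReal, div_mul_eq_mul_div, ← add_div, sub_conj_add_conj_mul,
        mul_div_cancel_left₀ _ hc₀]
    · rw [map_div₀, conj_ofReal, div_mul_eq_mul_div, ← add_div, sub_conj_add_conj_mul,
        mul_div_cancel_left₀ _ hc₀]

/-- Equivalence of conditions (5) and (6) characterizing the tetrablock: a point of `ℂ³` is of
the form `(a₁₁, a₂₂, det A)` for a symmetric 2×2 matrix of operator norm `< 1` iff `|x₃| < 1`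
and `x₁ = β₁ + conj(β₂) x₃`, `x₂ = β₂ + conj(β₁) x₃` for some `β₁, β₂` with `|β₁| + |β₂| < 1`. -/
theorem stmt12 (x₁ x₂ x₃ : ℂ) :
    (∃ A : Matrix (Fin 2) (Fin 2) ℂ, A.IsSymm ∧
      ‖Matrix.toEuclideanCLM (𝕜 := ℂ) A‖ < 1 ∧
      x₁ = A 0 0 ∧ x₂ = A 1 1 ∧ x₃ = A.det) ↔
    (‖x₃‖ < 1 ∧ ∃ β₁ β₂ : ℂ,
      ‖β₁‖ + ‖β₂‖ < 1 ∧
      x₁ = β₁ + conj β₂ * x₃ ∧ x₂ = β₂ + conj β₁ * x₃) := by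
  constructor
  · rintro ⟨A, hA, hnorm, rfl, rfl, rfl⟩
    have hdet : A.det = A 0 0 * A 1 1 - A 0 1 ^ 2 := by
      rw [Matrix.det_fin_two, hA.apply 0 1]; ring
    rw [Matrix.norm_toEuclideanCLM_lt_one_iff_fin_two, hA.apply 0 1, hdet] at hnorm
    obtain ⟨hΔ, hF⟩ := hnorm
    rw [hdet, exists_norm_add_norm_lt_one_iff hΔ]
    exact ⟨hΔ, (sq_norm_add_lt_one_add_iff hΔ).1 hF⟩
  · rintro ⟨hΔ, hβ⟩
    rw [exists_norm_add_norm_lt_one_iff hΔ] at hβ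
    obtain ⟨b, hb⟩ := IsAlgClosed.exists_pow_nat_eq (x₁ * x₂ - x₃) two_pos
    have hx₃ : x₃ = x₁ * x₂ - b ^ 2 := by rw [hb]; ring
    have hdet : (!![x₁, b; b, x₂]).det = x₃ := by rw [Matrix.det_fin_two_of, hx₃]; ring
    refine ⟨!![x₁, b; b, x₂], ?_, ?_, rfl, rfl, hdet.symm⟩
    · ext i j; fin_cases i <;> fin_cases j <;> rfl
    rw [Matrix.norm_toEuclideanCLM_lt_one_iff_fin_two, hdet, hx₃]
    rw [hx₃] at hΔ hβ
    exact ⟨hΔ, (sq_norm_add_lt_one_add_iff hΔ).2 hβ⟩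
end
end

section
/- The pentablock 𝒫 ⊂ ℂ³ is not a Reinhardt domain: (0, 2, 1) lies in the closure of 𝒫 but (0, 2i, 1) does not. -/
/-!
For `A = [[a, b], [c, d]]` the discriminant `tr A ^ 2 - 4 det A = (a - d) ^ 2 + 4 b c` is bounded
by `4 ‖A‖ ^ 2`, because every column of `A` has Euclidean norm at most `‖A‖`. Hence
`|x₂ ^ 2 - 4 x₃| ≤ 4` on the closure of the pentablock, which fails at `(0, 2i, 1)`, where
`x₂ ^ 2 - 4 x₃ = -8`. On the other hand `(0, 2, 1)` is the limit of the points `(0, 2z, z ^ 2)` given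
by the scalar contractions `z • 1`, `‖z‖ < 1`.
-/

open Complex

noncomputable section

/-- The pentablock `𝒫 = {(a₂₁, tr A, det A) : ‖A‖ < 1}`. -/
def Pentablock : Set (ℂ × ℂ × ℂ) :=
  {x | ∃ A : Matrix (Fin 2) (Fin 2) ℂ, ‖Matrix.toEuclideanCLM (𝕜 := ℂ) A‖ < 1 ∧
    x = (A 1 0, A.trace, A.det)}

namespace Matrix

open scoped Matrix.Norms.L2Operator

variable {𝕜 m n : Type*} [RCLike 𝕜] [Fintype m] [Fintype n] [DecidableEq n]

lemma sum_norm_sq_apply_le_l2_opNorm_sq (A : Matrix m n 𝕜) (j : n) :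
    ∑ i, ‖A i j‖ ^ 2 ≤ ‖A‖ ^ 2 := by
  have hcol := A.l2_opNorm_mulVec (EuclideanSpace.single j 1)
  rw [PiLp.norm_single, norm_one, mul_one] at hcol
  calc ∑ i, ‖A i j‖ ^ 2 = ‖(EuclideanSpace.equiv m 𝕜).symm (A *ᵥ Pi.single j 1)‖ ^ 2 := by
        rw [EuclideanSpace.norm_sq_eq, mulVec_single_one]; rfl
    _ ≤ ‖A‖ ^ 2 := by gcongr; exact hcol

lemma norm_trace_sq_sub_four_mul_det_le (A : Matrix (Fin 2) (Fin 2) 𝕜) :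
    ‖A.trace ^ 2 - 4 * A.det‖ ≤ 4 * ‖A‖ ^ 2 := by
  have hcol₀ := A.sum_norm_sq_apply_le_l2_opNorm_sq 0
  have hcol₁ := A.sum_norm_sq_apply_le_l2_opNorm_sq 1
  simp only [Fin.sum_univ_two] at hcol₀ hcol₁
  have hdisc : A.trace ^ 2 - 4 * A.det = (A 0 0 - A 1 1) ^ 2 + 4 * (A 0 1 * A 1 0) := by
    rw [trace_fin_two, det_fin_two]; ring
  have hdiag : ‖A 0 0 - A 1 1‖ ≤ ‖A 0 0‖ + ‖A 1 1‖ := norm_sub_le _ _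
  calc ‖A.trace ^ 2 - 4 * A.det‖ ≤ ‖A 0 0 - A 1 1‖ ^ 2 + 4 * (‖A 0 1‖ * ‖A 1 0‖) := by
        rw [hdisc]
        refine (norm_add_le _ _).trans_eq ?_
        rw [norm_pow, norm_mul, norm_mul, RCLike.norm_ofNat]
    _ ≤ 4 * ‖A‖ ^ 2 := by
        nlinarith [norm_nonneg (A 0 0 - A 1 1), norm_nonneg (A 0 0), norm_nonneg (A 1 1),
          sq_nonneg (‖A 0 0‖ - ‖A 1 1‖), sq_nonneg (‖A 0 1‖ - ‖A 1 0‖)]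

end Matrix

open scoped Matrix.Norms.L2Operator in
lemma scalar_mem_pentablock {z : ℂ} (hz : ‖z‖ < 1) : ((0 : ℂ), 2 * z, z ^ 2) ∈ Pentablock := by
  refine ⟨Matrix.diagonal fun _ ↦ z, ?_, ?_⟩
  · rwa [← Matrix.cstar_norm_def, Matrix.l2_opNorm_diagonal, pi_norm_const]
  · simp [two_mul, sq]

open scoped Matrix.Norms.L2Operator in
lemma closure_pentablock_subset :
    closure Pentablock ⊆ {x | ‖x.2.1 ^ 2 - 4 * x.2.2‖ ≤ 4} := by
  refine closure_minimal ?_ (isClosed_le (by fun_prop) continuous_const)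
  rintro _ ⟨A, hA, rfl⟩
  rw [← Matrix.cstar_norm_def] at hA
  calc ‖A.trace ^ 2 - 4 * A.det‖ ≤ 4 * ‖A‖ ^ 2 := A.norm_trace_sq_sub_four_mul_det_le
    _ ≤ 4 := by nlinarith [norm_nonneg A]

/-- The pentablock is not a Reinhardt domain: `(0,2,1)` lies in its closure but `(0,2i,1)`
does not. -/
theorem stmt16 :
    ((0 : ℂ), (2 : ℂ), (1 : ℂ)) ∈ closure Pentablock ∧
    ((0 : ℂ), (2 * I : ℂ), (1 : ℂ)) ∉ closure Pentablock := by
  constructor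
  · have hcurve : Continuous fun z : ℂ ↦ ((0 : ℂ), 2 * z, z ^ 2) := by fun_prop
    have hone : (1 : ℂ) ∈ closure (Metric.ball 0 1) := by
      rw [closure_ball 0 one_ne_zero]; simp
    have hmaps : Set.MapsTo (fun z : ℂ ↦ ((0 : ℂ), 2 * z, z ^ 2)) (Metric.ball 0 1) Pentablock :=
      fun z hz ↦ scalar_mem_pentablock (mem_ball_zero_iff.mp hz)
    simpa using map_mem_closure hcurve hone hmaps
  · intro hmem
    have hdisc := closure_pentablock_subset hmem
    have h8 : (2 * I) ^ 2 - 4 * 1 = -8 := by rw [mul_pow, I_sq]; ring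
    rw [Set.mem_ofPred_eq, h8] at hdisc
    norm_num at hdisc
end
end

section
/- The complex Jacobian determinant of the symmetrization map π_n(z₁,…,z_n) = (e₁(z),…,e_n(z)) equals ± the Vandermonde determinant ∏_{1 ≤ j < k ≤ n} (z_j − z_k); in particular it is a homogeneous polynomial of degree n(n−1)/2. -/
/-!
Writing `ẑⱼ` for `z` with `zⱼ` omitted, `e_{k+1}(z) = e_{k+1}(ẑⱼ) + zⱼ e_k(ẑⱼ)` is affine
in `zⱼ`, so the Jacobian matrix of `π_n` has entries `∂e_{k+1}/∂zⱼ = e_k(ẑⱼ)`. Solving the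
same recursion for `e_k(ẑⱼ)` gives `e_k(ẑⱼ) = ∑_{i ≤ k} e_{k-i}(z) (-zⱼ)^i`: the Jacobian
matrix is a unipotent lower triangular Toeplitz matrix times the transposed Vandermonde
matrix of `-z`. Its determinant is therefore exactly `∏_{i<j} (zᵢ - zⱼ)` (so `ε = 1`),
which is homogeneous of degree `n(n-1)/2`.
-/

open Complex

noncomputable section

/-- The symmetrization map `π_n : ℂⁿ → ℂⁿ`, whose `k`-th coordinate is the `(k+1)`-st
elementary symmetric polynomial. -/
def symMap (n : ℕ) (z : Fin n → ℂ) : Fin n → ℂ :=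
  fun k => ∑ s ∈ Finset.univ.powersetCard (k.val + 1), ∏ i ∈ s, z i

open Finset Matrix

namespace Multiset

theorem esymm_cons_succ {R : Type*} [CommSemiring R] (a : R) (s : Multiset R) (k : ℕ) :
    (a ::ₘ s).esymm (k + 1) = s.esymm (k + 1) + a * s.esymm k := by
  simp [esymm, map_map, sum_map_mul_left]

theorem esymm_eq_sum_esymm_cons_mul_neg_pow {R : Type*} [CommRing R] (a : R) (s : Multiset R)
    (k : ℕ) : s.esymm k = ∑ i ∈ Finset.range (k + 1), (a ::ₘ s).esymm (k - i) * (-a) ^ i := by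
  induction k with
  | zero => simp [esymm]
  | succ k ih =>
    rw [sum_range_succ', Nat.sub_zero, pow_zero, mul_one,
      eq_sub_of_add_eq (esymm_cons_succ a s k).symm, ih, mul_sum]
    simp only [Nat.succ_sub_succ, pow_succ]
    rw [sub_eq_neg_add, ← sum_neg_distrib]
    congr 1
    exact sum_congr rfl fun i _ => by ring

end Multiset

theorem Finset.univ_val_map_eq_cons_erase {ι R : Type*} [Fintype ι] [DecidableEq ι]
    (z : ι → R) (j : ι) : (univ : Finset ι).val.map z = z j ::ₘ (univ.erase j).val.map z := by
  rw [erase_val, ← Multiset.map_cons, Multiset.cons_erase (mem_univ_val j)]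

section Jacobian

variable {R : Type*} [CommRing R] {n : ℕ}

def jacobianEsymm (z : Fin n → R) : Matrix (Fin n) (Fin n) R :=
  of fun k j => ((univ.erase j).val.map z).esymm k

def esymmLowerToeplitz (z : Fin n → R) : Matrix (Fin n) (Fin n) R :=
  of fun k i => if i ≤ k then (univ.val.map z).esymm (k - i) else 0

theorem det_esymmLowerToeplitz (z : Fin n → R) : (esymmLowerToeplitz z).det = 1 := by
  rw [det_of_isLowerTriangular]
  · simp [esymmLowerToeplitz, Multiset.esymm]
  · intro k i hki
    simp [esymmLowerToeplitz, not_le.2 (show k < i from hki)]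

theorem jacobianEsymm_eq_esymmLowerToeplitz_mul (z : Fin n → R) :
    jacobianEsymm z = esymmLowerToeplitz z * (vandermonde (-z))ᵀ := by
  ext k j
  rw [jacobianEsymm, of_apply, mul_apply, Multiset.esymm_eq_sum_esymm_cons_mul_neg_pow (z j),
    ← univ_val_map_eq_cons_erase]
  simp only [esymmLowerToeplitz, of_apply, transpose_apply, vandermonde_apply, Pi.neg_apply,
    ite_mul, zero_mul]
  rw [← sum_filter, filter_ge_eq_Iic, Nat.range_succ_eq_Iic, ← Fin.map_valEmbedding_Iic, sum_map]
  rfl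

theorem det_jacobianEsymm (z : Fin n → R) :
    (jacobianEsymm z).det = ∏ i, ∏ j ∈ Ioi i, (z i - z j) := by
  rw [jacobianEsymm_eq_esymmLowerToeplitz_mul, det_mul, det_esymmLowerToeplitz, one_mul,
    det_transpose, det_vandermonde]
  simp only [Pi.neg_apply, neg_sub_neg]

end Jacobian

theorem prod_filter_lt_eq_prod_prod_Ioi {α M : Type*} [Fintype α] [LinearOrder α]
    [LocallyFiniteOrderTop α] [CommMonoid M] (f : α → α → M) :
    ∏ p ∈ univ.filter (fun p : α × α => p.1 < p.2), f p.1 p.2 = ∏ i, ∏ j ∈ Ioi i, f i j := by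
  rw [prod_filter, Fintype.prod_prod_type]
  refine prod_congr rfl fun i _ => ?_
  rw [← prod_filter]
  congr 1
  ext j
  simp

theorem Fin.prod_prod_Ioi_mul {M : Type*} [CommMonoid M] {n : ℕ} (c : M)
    (f : Fin n → Fin n → M) :
    ∏ i, ∏ j ∈ Ioi i, (c * f i j) = c ^ (n * (n - 1) / 2) * ∏ i, ∏ j ∈ Ioi i, f i j := by
  simp_rw [Finset.prod_mul_distrib, Finset.prod_const, Fin.card_Ioi, prod_pow_eq_pow_sum]
  rw [Fin.sum_univ_eq_sum_range (fun i => n - 1 - i), sum_range_reflect (fun i => i), sum_range_id]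

theorem det_fderiv_eq_of_hasLineDerivAt {𝕜 ι : Type*} [NontriviallyNormedField 𝕜] [Fintype ι]
    [DecidableEq ι] {f : (ι → 𝕜) → (ι → 𝕜)} {z : ι → 𝕜} {J : Matrix ι ι 𝕜}
    (hf : DifferentiableAt 𝕜 f z)
    (hJ : ∀ j, HasLineDerivAt 𝕜 f (fun k => J k j) z (Pi.single j 1)) :
    (fderiv 𝕜 f z).det = J.det := by
  have hmat : LinearMap.toMatrix' (fderiv 𝕜 f z : (ι → 𝕜) →ₗ[𝕜] ι → 𝕜) = J := by
    ext k j
    rw [LinearMap.toMatrix'_apply]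
    exact congrFun ((hf.hasFDerivAt.hasLineDerivAt _).unique (hJ j)) k
  rw [ContinuousLinearMap.det, ← LinearMap.det_toMatrix', hmat]

section SymMap

variable {n : ℕ}

theorem differentiable_symMap : Differentiable ℂ (symMap n) := by
  unfold symMap
  fun_prop

theorem symMap_apply_eq_esymm_erase (z : Fin n → ℂ) (k j : Fin n) :
    symMap n z k =
      ((univ.erase j).val.map z).esymm (k + 1) + z j * ((univ.erase j).val.map z).esymm k := by
  rw [symMap, ← esymm_map_val, univ_val_map_eq_cons_erase z j, Multiset.esymm_cons_succ]

theorem hasLineDerivAt_symMap (z : Fin n → ℂ) (j : Fin n) :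
    HasLineDerivAt ℂ (symMap n) (fun k => jacobianEsymm z k j) z (Pi.single j 1) := by
  rw [HasLineDerivAt, hasDerivAt_pi]
  intro k
  set E := (univ.erase j).val.map z
  have hline : (fun t : ℂ => symMap n (z + t • Pi.single j 1) k) =
      fun t => E.esymm (k + 1) + (z j + t) * E.esymm k := by
    funext t
    have hrest : (univ.erase j).val.map (z + t • Pi.single j 1) = E :=
      Multiset.map_congr rfl fun i hi => by
        simp [Pi.single_eq_of_ne (ne_of_mem_erase (mem_def.2 hi))]
    rw [symMap_apply_eq_esymm_erase _ k j, hrest]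
    simp
  rw [hline]
  have hderiv := (((hasDerivAt_id (0 : ℂ)).const_add (z j)).mul_const (E.esymm k)).const_add
    (E.esymm (k + 1))
  rw [one_mul] at hderiv
  exact hderiv

end SymMap

/-- The Jacobian determinant of `π_n` equals `±` the Vandermonde determinant
`∏_{j<k} (z_j - z_k)`; in particular it is homogeneous of degree `n(n-1)/2`. -/
theorem stmt18 (n : ℕ) :
    (∃ ε : ℂ, (ε = 1 ∨ ε = -1) ∧ ∀ z : Fin n → ℂ,
      (fderiv ℂ (symMap n) z).det =
        ε * ∏ p ∈ Finset.univ.filter (fun p : Fin n × Fin n => p.1 < p.2), (z p.1 - z p.2)) ∧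
    (∀ (c : ℂ) (z : Fin n → ℂ),
      (fderiv ℂ (symMap n) (c • z)).det = c ^ (n * (n - 1) / 2) * (fderiv ℂ (symMap n) z).det) := by
  have hdet (z : Fin n → ℂ) : (fderiv ℂ (symMap n) z).det = ∏ i, ∏ j ∈ Ioi i, (z i - z j) := by
    rw [det_fderiv_eq_of_hasLineDerivAt (differentiable_symMap z) (hasLineDerivAt_symMap z),
      det_jacobianEsymm]
  refine ⟨⟨1, Or.inl rfl, fun z => ?_⟩, fun c z => ?_⟩
  · rw [hdet, one_mul, prod_filter_lt_eq_prod_prod_Ioi (fun a b => z a - z b)]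
  · simp_rw [hdet, Pi.smul_apply, smul_eq_mul, ← mul_sub, Fin.prod_prod_Ioi_mul]
end
end
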